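/- Let u be a smooth ancient solution of the heat equation Δu - ∂ₜu = 0 on ℝⁿ × (-∞, 0] satisfying |u(x,t)| ≤ A₁ e^{A₂(|x| + |t|)} for all (x,t) ∈ ℝⁿ × (-∞, 0], where A₁, A₂ > 0. Then for every x ∈ ℝⁿ and every t ≤ 0 the Taylor series in time converges to u: u(x,t) = Σ_{j=0}^∞ ∂ₜ^j u(x,0) · t^j / j!, and moreover the convergence is uniform on Q(0,R) = B(0,R) × [-R, 0] for every fixed R ≥ 1. -/

import Mathlib

open MeasureTheory Real Set Metric Filter

lemma infOne : (1 : WithTop ℕ∞) ≤ ((⊤:ℕ∞) : WithTop ℕ∞) := by exact_mod_cast le_top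
lemma infNe : ((⊤:ℕ∞) : WithTop ℕ∞) ≠ 0 := by simp
lemma infSucc : ((⊤:ℕ∞) : WithTop ℕ∞) + 1 ≤ ((⊤:ℕ∞) : WithTop ℕ∞) := by exact_mod_cast le_top

noncomputable section

variable {n : ℕ}

local notation "E" => EuclideanSpace ℝ (Fin n)
local notation "P" => (EuclideanSpace ℝ (Fin n)) × ℝ

/-- directional derivative operator -/
noncomputable def Dv (v : P) (F : P → ℝ) : P → ℝ := fun p => fderiv ℝ F p v

lemma Dv_smooth {F : P → ℝ} (hF : ContDiff ℝ (⊤:ℕ∞) F) (v : P) : ContDiff ℝ (⊤:ℕ∞) (Dv v F) := by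
  exact (hF.fderiv_right infSucc).clm_apply contDiff_const

lemma Dv_clm (v : P) {F : P → ℝ} (hF : ContDiff ℝ (⊤:ℕ∞) F) (p : P) :
    Dv v F p = (fderiv ℝ F p) v := rfl

lemma Dv_comm {F : P → ℝ} (hF : ContDiff ℝ (⊤:ℕ∞) F) (v w : P) (p : P) :
    Dv v (Dv w F) p = Dv w (Dv v F) p := by
  have hd : Differentiable ℝ (fderiv ℝ F) :=
    (hF.fderiv_right infSucc).differentiable infNe
  have key : ∀ a b : P, Dv a (Dv b F) p = fderiv ℝ (fderiv ℝ F) p a b := by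
    intro a b
    have : Dv b F = fun q => (fderiv ℝ F q) b := rfl
    rw [this]
    have h1 : fderiv ℝ (fun q => (fderiv ℝ F q) b) p = (fderiv ℝ (fderiv ℝ F) p).flip b := by
      rw [fderiv_clm_apply (hd p) (differentiableAt_const b)]
      simp
    show fderiv ℝ (fun q => (fderiv ℝ F q) b) p a = _
    rw [h1]; rfl
  rw [key, key]
  exact second_derivative_symmetric (f := F) (f' := fderiv ℝ F)
    (fun y => (hF.differentiable infNe y).hasFDerivAt) ((hd p).hasFDerivAt) v w

lemma Dv_slice_t {F : P → ℝ} (hF : Differentiable ℝ F) (x : E) (t₀ : ℝ) :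
    HasDerivAt (fun t => F (x, t)) (Dv (0, 1) F (x, t₀)) t₀ := by
  have hc : HasDerivAt (fun t : ℝ => ((x : E), t)) ((0 : E), (1 : ℝ)) t₀ :=
    (hasDerivAt_const t₀ x).prodMk (hasDerivAt_id t₀)
  exact (hF (x, t₀)).hasFDerivAt.comp_hasDerivAt t₀ hc

lemma Dv_slice_x {F : P → ℝ} (hF : Differentiable ℝ F) (v : E) (x : E) (t : ℝ) (s₀ : ℝ) :
    HasDerivAt (fun s : ℝ => F (x + s • v, t)) (Dv (v, 0) F (x + s₀ • v, t)) s₀ := by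
  have hc : HasDerivAt (fun s : ℝ => (x + s • v, t)) ((v : E), (0 : ℝ)) s₀ := by
    have h1 : HasDerivAt (fun s : ℝ => x + s • v) v s₀ := by
      simpa using ((hasDerivAt_id s₀).smul_const v).const_add x
    exact h1.prodMk (hasDerivAt_const s₀ t)
  exact (hF (x + s₀ • v, t)).hasFDerivAt.comp_hasDerivAt s₀ hc

/-- spatial derivative vanishes for functions vanishing on the halfspace -/
lemma Dv_spatial_zero {G : P → ℝ} (hG : Differentiable ℝ G)
    (h0 : ∀ q : P, q.2 ≤ 0 → G q = 0) (v : E) (p : P) (hp : p.2 ≤ 0) :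
    Dv (v, 0) G p = 0 := by
  have h1 : HasDerivAt (fun s : ℝ => G (p.1 + s • v, p.2)) (Dv (v, 0) G (p.1 + (0:ℝ) • v, p.2)) 0 :=
    Dv_slice_x hG v p.1 p.2 0
  have h2 : (fun s : ℝ => G (p.1 + s • v, p.2)) = fun _ => (0 : ℝ) := by
    funext s; exact h0 _ hp
  rw [h2] at h1
  have h3 := (hasDerivAt_const (0 : ℝ) (0 : ℝ)).unique h1
  simpa using h3.symm


/-- unit coordinate vectors -/
noncomputable def ee (i : Fin n) : EuclideanSpace ℝ (Fin n) := EuclideanSpace.single i 1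

noncomputable def lap (F : P → ℝ) : P → ℝ :=
  fun p => ∑ i : Fin n, Dv (ee i, 0) (Dv (ee i, 0) F) p

noncomputable def heatOp (F : P → ℝ) : P → ℝ :=
  fun p => Dv (0, 1) F p - lap F p

lemma lap_smooth {F : P → ℝ} (hF : ContDiff ℝ (⊤:ℕ∞) F) : ContDiff ℝ (⊤:ℕ∞) (lap F) :=
  ContDiff.sum fun i _ => Dv_smooth (Dv_smooth hF _) _

lemma heatOp_smooth {F : P → ℝ} (hF : ContDiff ℝ (⊤:ℕ∞) F) : ContDiff ℝ (⊤:ℕ∞) (heatOp F) :=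
  (Dv_smooth hF _).sub (lap_smooth hF)

lemma Dv_add {F G : P → ℝ} (hF : DifferentiableAt ℝ F p) (hG : DifferentiableAt ℝ G p) (v : P) :
    Dv v (fun q => F q + G q) p = Dv v F p + Dv v G p := by
  unfold Dv; rw [fderiv_fun_add hF hG]; rfl

lemma Dv_sub {F G : P → ℝ} (hF : DifferentiableAt ℝ F p) (hG : DifferentiableAt ℝ G p) (v : P) :
    Dv v (fun q => F q - G q) p = Dv v F p - Dv v G p := by
  unfold Dv; rw [fderiv_fun_sub hF hG]; rfl

lemma Dv_mul {F G : P → ℝ} (hF : DifferentiableAt ℝ F p) (hG : DifferentiableAt ℝ G p) (v : P) :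
    Dv v (fun q => F q * G q) p = F p * Dv v G p + Dv v F p * G p := by
  unfold Dv; rw [fderiv_fun_mul hF hG]; simp [mul_comm]

lemma Dv_const_mul {F : P → ℝ} (hF : DifferentiableAt ℝ F p) (c : ℝ) (v : P) :
    Dv v (fun q => c * F q) p = c * Dv v F p := by
  unfold Dv; rw [fderiv_const_mul hF]; rfl

lemma Dv_sum {ι : Type*} (s : Finset ι) {F : ι → P → ℝ}
    (hF : ∀ i ∈ s, DifferentiableAt ℝ (F i) p) (v : P) :
    Dv v (fun q => ∑ i ∈ s, F i q) p = ∑ i ∈ s, Dv v (F i) p := by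
  unfold Dv; rw [fderiv_fun_sum hF]; simp

/-- product rule for the heat operator -/
lemma heatOp_mul {F G : P → ℝ} (hF : ContDiff ℝ (⊤:ℕ∞) F) (hG : ContDiff ℝ (⊤:ℕ∞) G) (p : P) :
    heatOp (fun q => F q * G q) p =
      F p * heatOp G p + G p * heatOp F p
        - 2 * ∑ i : Fin n, Dv (ee i, 0) F p * Dv (ee i, 0) G p := by
  have hFd : Differentiable ℝ F := hF.differentiable infNe
  have hGd : Differentiable ℝ G := hG.differentiable infNe
  have hmul : ∀ v : P, Dv v (fun q => F q * G q) = fun q => F q * Dv v G q + Dv v F q * G q := by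
    intro v; funext q; exact Dv_mul (hFd q) (hGd q) v
  have hDt : Dv (0,1) (fun q => F q * G q) p
      = F p * Dv (0,1) G p + Dv (0,1) F p * G p := Dv_mul (hFd p) (hGd p) _
  have hlap : lap (fun q => F q * G q) p
      = F p * lap G p + G p * lap F p
        + 2 * ∑ i : Fin n, Dv (ee i, 0) F p * Dv (ee i, 0) G p := by
    unfold lap
    have : ∀ i : Fin n, Dv (ee i, 0) (Dv (ee i, 0) (fun q => F q * G q)) p
        = F p * Dv (ee i,0) (Dv (ee i,0) G) p + G p * Dv (ee i,0) (Dv (ee i,0) F) p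
          + 2 * (Dv (ee i,0) F p * Dv (ee i,0) G p) := by
      intro i
      rw [hmul (ee i, 0)]
      rw [Dv_add ((hFd p).fun_mul ((Dv_smooth hG _).differentiable infNe p))
        (((Dv_smooth hF _).differentiable infNe p).fun_mul (hGd p))]
      rw [Dv_mul (hFd p) ((Dv_smooth hG _).differentiable infNe p)]
      rw [Dv_mul ((Dv_smooth hF _).differentiable infNe p) (hGd p)]
      ring
    rw [Finset.sum_congr rfl (fun i _ => this i)]
    rw [Finset.sum_add_distrib, Finset.sum_add_distrib, ← Finset.mul_sum, ← Finset.mul_sum,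
      ← Finset.mul_sum]
  unfold heatOp
  rw [hDt, hlap]
  ring

/-- heat operator of squares -/
lemma heatOp_sq {F : P → ℝ} (hF : ContDiff ℝ (⊤:ℕ∞) F) (p : P) :
    heatOp (fun q => F q ^ 2) p =
      2 * F p * heatOp F p - 2 * ∑ i : Fin n, Dv (ee i, 0) F p ^ 2 := by
  have := heatOp_mul hF hF p
  have h2 : (fun q => F q ^ 2) = fun q => F q * F q := by funext q; ring
  rw [h2, this]
  have : ∀ i : Fin n, Dv (ee i, 0) F p * Dv (ee i, 0) F p = Dv (ee i, 0) F p ^ 2 := by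
    intro i; ring
  rw [Finset.sum_congr rfl (fun i _ => this i)]
  ring

def Caloric (F : P → ℝ) : Prop := ∀ p : P, p.2 ≤ 0 → heatOp F p = 0

lemma Dv_comm_fun {F : P → ℝ} (hF : ContDiff ℝ (⊤:ℕ∞) F) (v w : P) :
    Dv v (Dv w F) = Dv w (Dv v F) := funext fun p => Dv_comm hF v w p

/-- heat operator commutes with Dv -/
lemma heatOp_Dv {F : P → ℝ} (hF : ContDiff ℝ (⊤:ℕ∞) F) (v : P) (p : P) :
    heatOp (Dv v F) p = Dv v (heatOp F) p := by
  have h1 : Dv v (heatOp F) p = Dv v (Dv (0,1) F) p - Dv v (lap F) p := by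
    have : heatOp F = fun q => Dv (0,1) F q - lap F q := rfl
    rw [this, Dv_sub ((Dv_smooth hF _).differentiable infNe p)
      ((lap_smooth hF).differentiable infNe p)]
  have h2 : Dv v (lap F) p = ∑ i : Fin n, Dv (ee i,0) (Dv (ee i,0) (Dv v F)) p := by
    have : lap F = fun q => ∑ i : Fin n, Dv (ee i,0) (Dv (ee i,0) F) q := rfl
    rw [this, Dv_sum _ (fun i _ => (Dv_smooth (Dv_smooth hF _) _).differentiable infNe p)]
    refine Finset.sum_congr rfl (fun i _ => ?_)
    rw [← Dv_comm_fun hF v (ee i, 0), Dv_comm (Dv_smooth hF _) v (ee i,0) p]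
  show Dv (0,1) (Dv v F) p - lap (Dv v F) p = _
  rw [h1, h2, Dv_comm_fun hF (0,1) v]
  rfl

lemma caloric_Dv_spatial {F : P → ℝ} (hF : ContDiff ℝ (⊤:ℕ∞) F) (hc : Caloric F) (v : E) :
    Caloric (Dv (v, 0) F) := by
  intro p hp
  rw [heatOp_Dv hF (v,0) p]
  exact Dv_spatial_zero ((heatOp_smooth hF).differentiable infNe) hc v p hp

lemma caloric_Dt {F : P → ℝ} (hF : ContDiff ℝ (⊤:ℕ∞) F) (hc : Caloric F) :
    Caloric (Dv ((0 : E), 1) F) := by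
  have hsm : ContDiff ℝ (⊤:ℕ∞) (Dv ((0:E),1) (heatOp F)) := Dv_smooth (heatOp_smooth hF) _
  have hneg : ∀ p : P, p.2 < 0 → Dv ((0:E),1) (heatOp F) p = 0 := by
    intro p hp
    have hopen : {q : P | q.2 < 0} ∈ nhds p := by
      exact (isOpen_lt continuous_snd continuous_const).mem_nhds hp
    have hev : heatOp F =ᶠ[nhds p] (fun _ => (0:ℝ)) := by
      filter_upwards [hopen] with q hq
      exact hc q (le_of_lt hq)
    unfold Dv
    rw [hev.fderiv_eq, fderiv_fun_const]
    rfl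
  intro p hp
  rw [heatOp_Dv hF _ p]
  rcases lt_or_eq_of_le hp with h | h
  · exact hneg p h
  · -- p.2 = 0, use continuity from the left
    have hcont : ContinuousAt (fun t : ℝ => Dv ((0:E),1) (heatOp F) (p.1, t)) 0 := by
      exact (hsm.continuous.comp (by continuity)).continuousAt
    have h1 : Tendsto (fun t : ℝ => Dv ((0:E),1) (heatOp F) (p.1, t)) (nhdsWithin 0 (Iio 0))
        (nhds (Dv ((0:E),1) (heatOp F) (p.1, 0))) := hcont.continuousWithinAt.tendsto
    have h2 : Tendsto (fun t : ℝ => Dv ((0:E),1) (heatOp F) (p.1, t)) (nhdsWithin 0 (Iio 0))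
        (nhds 0) := by
      apply Tendsto.congr' _ tendsto_const_nhds
      filter_upwards [self_mem_nhdsWithin] with t ht
      exact (hneg (p.1, t) ht).symm
    have : Dv ((0:E),1) (heatOp F) (p.1, 0) = 0 := tendsto_nhds_unique h1 h2
    have hp2 : p = (p.1, 0) := by
      cases p; simp at h ⊢; exact h
    rw [hp2]; exact this


/-- second derivative test at a local max -/
lemma second_deriv_test {h : ℝ → ℝ} (hsm : ContDiff ℝ (⊤:ℕ∞) h) (hmax : IsLocalMax h 0) :
    deriv (deriv h) 0 ≤ 0 := by
  by_contra hlt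
  push_neg at hlt
  have h1 : deriv h 0 = 0 := hmax.deriv_eq_zero
  have hc2 : Continuous (deriv (deriv h)) :=
    ((hsm.iterate_deriv 2).continuous)
  have hev : ∀ᶠ s in nhds (0:ℝ), 0 < deriv (deriv h) s :=
    (hc2.continuousAt).eventually (eventually_gt_nhds hlt)
  rcases Metric.eventually_nhds_iff.1 hev with ⟨δ, hδ, hball⟩
  have hd1cont : Continuous (deriv h) := hsm.continuous_deriv infOne
  have hpos : ∀ x ∈ Ioo (0:ℝ) δ, 0 < deriv h x := by
    intro x hx
    have hmono : StrictMonoOn (deriv h) (Ioo (-δ) δ) := by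
      apply strictMonoOn_of_deriv_pos (convex_Ioo _ _) (hd1cont.continuousOn)
      intro y hy
      rw [interior_Ioo] at hy
      apply hball
      rw [Real.dist_eq, sub_zero, abs_lt]
      exact ⟨hy.1, hy.2⟩
    have h0mem : (0:ℝ) ∈ Ioo (-δ) δ := ⟨by linarith, hδ⟩
    have hxmem : x ∈ Ioo (-δ) δ := ⟨by cases hx; linarith, hx.2⟩
    have := hmono h0mem hxmem hx.1
    rwa [h1] at this
  have hmono2 : StrictMonoOn h (Ico (0:ℝ) δ) := by
    apply strictMonoOn_of_deriv_pos (convex_Ico _ _) (hsm.continuous.continuousOn)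
    intro y hy
    rw [interior_Ico] at hy
    exact hpos y hy
  have hfreq : ∀ᶠ x in nhdsWithin (0:ℝ) (Ioi 0), h x ≤ h 0 :=
    hmax.filter_mono nhdsWithin_le_nhds
  have hIoo : Ioo (0:ℝ) δ ∈ nhdsWithin (0:ℝ) (Ioi 0) :=
    Ioo_mem_nhdsGT_of_mem ⟨le_refl 0, hδ⟩
  have : ∀ᶠ x in nhdsWithin (0:ℝ) (Ioi 0), False := by
    filter_upwards [hfreq, hIoo] with x hx1 hx2
    have := hmono2 ⟨le_refl 0, hδ⟩ ⟨le_of_lt hx2.1, hx2.2⟩ hx2.1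
    linarith
  exact this.exists.elim (fun _ hf => hf)


/-- at a max over `Icc a b` attained at `t* ∈ Ioc a b`, the derivative is nonneg -/
lemma deriv_nonneg_of_max_right {g : ℝ → ℝ} {a b t : ℝ} (hg : Differentiable ℝ g)
    (ht : t ∈ Ioc a b) (hmax : ∀ s ∈ Icc a b, g s ≤ g t) : 0 ≤ deriv g t := by
  have hslope : Tendsto (slope g t) (nhdsWithin t {t}ᶜ) (nhds (deriv g t)) :=
    hasDerivAt_iff_tendsto_slope.1 (hg t).hasDerivAt
  have hsub : nhdsWithin t (Ioo a t) ≤ nhdsWithin t {t}ᶜ := by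
    apply nhdsWithin_mono
    intro s hs
    exact fun h => absurd h (by simp; exact ne_of_lt hs.2)
  have h2 : Tendsto (slope g t) (nhdsWithin t (Ioo a t)) (nhds (deriv g t)) :=
    hslope.mono_left hsub
  have hne : (nhdsWithin t (Ioo a t)).NeBot := right_nhdsWithin_Ioo_neBot ht.1
  apply ge_of_tendsto h2
  filter_upwards [self_mem_nhdsWithin] with s hs
  have h3 : g s ≤ g t := hmax s ⟨le_of_lt hs.1, le_of_lt (lt_of_lt_of_le hs.2 ht.2)⟩
  rw [slope_def_field]
  have : s - t < 0 := by linarith [hs.2]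
  exact div_nonneg_iff.2 (Or.inr ⟨by linarith, by linarith⟩)

lemma Dv_snd_affine (a c : ℝ) (v : P) (p : P) :
    Dv v (fun q : P => c * (q.2 - a)) p = c * v.2 := by
  unfold Dv
  have h : HasFDerivAt (fun q : P => c * (q.2 - a))
      (c • ((ContinuousLinearMap.snd ℝ (EuclideanSpace ℝ (Fin n)) ℝ))) p := by
    simpa using ((hasFDerivAt_snd (𝕜 := ℝ) (p := p)).sub_const a).const_mul c
  rw [h.fderiv]
  simp

/-- Parabolic maximum principle on a compact cylinder. -/
lemma maxprin {w : P → ℝ} (hw : ContDiff ℝ (⊤:ℕ∞) w) (c : E) {r : ℝ} (hr : 0 < r)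
    {a b : ℝ} (hab : a < b)
    (hsub : ∀ p : P, p.1 ∈ ball c r → p.2 ∈ Ioc a b → heatOp w p ≤ 0)
    {M : ℝ}
    (hbot : ∀ x ∈ closedBall c r, w (x, a) ≤ M)
    (hlat : ∀ x : E, dist x c = r → ∀ t ∈ Icc a b, w (x, t) ≤ M) :
    ∀ p ∈ (closedBall c r) ×ˢ (Icc a b), w p ≤ M := by
  intro p hp
  have key : ∀ ε : ℝ, 0 < ε → w p ≤ M + ε * (b - a) := by
    intro ε hε
    set wε : P → ℝ := fun q => w q - ε * (q.2 - a) with hwε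
    have hwεsm : ContDiff ℝ (⊤:ℕ∞) wε :=
      hw.sub ((contDiff_const).mul ((contDiff_snd).sub contDiff_const))
    have hK : IsCompact ((closedBall c r) ×ˢ (Icc a b)) :=
      (isCompact_closedBall c r).prod isCompact_Icc
    have hKne : ((closedBall c r) ×ˢ (Icc a b)).Nonempty :=
      ⟨(c, a), by simp [hr.le, hab.le]⟩
    obtain ⟨q, hqK, hqmax⟩ := hK.exists_isMaxOn hKne (hwεsm.continuous.continuousOn)
    rw [isMaxOn_iff] at hqmax
    have hq1 : q.1 ∈ closedBall c r := (mem_prod.1 hqK).1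
    have hq2 : q.2 ∈ Icc a b := (mem_prod.1 hqK).2
    -- the max value is at most M
    have hDvε : ∀ v : P, Dv v wε = fun p => Dv v w p - ε * v.2 := by
      intro v; funext p'
      have hd2 : DifferentiableAt ℝ (fun q : P => ε * (q.2 - a)) p' :=
        ((contDiff_const.mul ((contDiff_snd).sub contDiff_const)).differentiable infNe) p'
      have := Dv_sub (p := p') (hw.differentiable infNe p') hd2 v
      simp only [hwε]
      rw [show (fun q : P => w q - ε * (q.2 - a)) = (fun q : P => w q - (fun q : P => ε * (q.2 - a)) q) from rfl]
      rw [this, Dv_snd_affine]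
    have hqM : wε q ≤ M := by
      by_cases hcase1 : q.2 = a
      · obtain ⟨q1, q2⟩ := q
        simp only at hcase1
        subst hcase1
        have hb := hbot q1 hq1
        simp only [hwε]
        simpa using hb
      by_cases hcase2 : dist q.1 c = r
      · have h1 : w q ≤ M := by
          have := hlat q.1 hcase2 q.2 hq2
          simpa using this
        have h2 : 0 ≤ ε * (q.2 - a) := by
          apply mul_nonneg hε.le; linarith [hq2.1]
        simp only [hwε]; linarith
      -- interior case: contradiction
      · exfalso
        have hball : q.1 ∈ ball c r := by
          rw [mem_ball]
          rcases lt_or_eq_of_le (mem_closedBall.1 hq1) with h | h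
          · exact h
          · exact absurd h hcase2
        have hIoc : q.2 ∈ Ioc a b := ⟨lt_of_le_of_ne hq2.1 (Ne.symm hcase1), hq2.2⟩
        -- time derivative nonneg
        have htd : 0 ≤ Dv ((0:E),1) wε q := by
          have hgd : Differentiable ℝ (fun t => wε (q.1, t)) := by
            apply Differentiable.comp (hwεsm.differentiable infNe)
            exact (differentiable_const _).prodMk differentiable_id
          have hder : deriv (fun t => wε (q.1, t)) q.2 = Dv ((0:E),1) wε (q.1, q.2) :=
            (Dv_slice_t (hwεsm.differentiable infNe) q.1 q.2).deriv
          have := deriv_nonneg_of_max_right hgd hIoc (fun s hs => by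
            have : (q.1, s) ∈ (closedBall c r) ×ˢ (Icc a b) := ⟨hq1, hs⟩
            exact hqmax _ this)
          rw [hder] at this
          simpa using this
        -- spatial second derivatives nonpos
        have hsd : ∀ i : Fin n, Dv (ee i, 0) (Dv (ee i, 0) wε) q ≤ 0 := by
          intro i
          set h : ℝ → ℝ := fun s => wε (q.1 + s • ee i, q.2) with hh
          have hhsm : ContDiff ℝ (⊤:ℕ∞) h := by
            apply hwεsm.comp
            exact ((contDiff_const.add (contDiff_id.smul contDiff_const)).prodMk contDiff_const)
          have hlm : IsLocalMax h 0 := by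
            have hcont : Continuous (fun s : ℝ => q.1 + s • ee i) := by continuity
            have hmem : ∀ᶠ s in nhds (0:ℝ), q.1 + s • ee i ∈ ball c r := by
              have h0 : q.1 + (0:ℝ) • ee i ∈ ball c r := by simpa using hball
              exact hcont.continuousAt.eventually_mem (isOpen_ball.mem_nhds h0)
            filter_upwards [hmem] with s hs
            have : (q.1 + s • ee i, q.2) ∈ (closedBall c r) ×ˢ (Icc a b) :=
              ⟨ball_subset_closedBall hs, hq2⟩
            have h2 := hqmax _ this
            simpa [hh] using h2
          have htest := second_deriv_test hhsm hlm
          -- identify deriv (deriv h) 0 with the second Dv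
          have hd1 : deriv h = fun s => Dv (ee i, 0) wε (q.1 + s • ee i, q.2) := by
            funext s
            exact (Dv_slice_x (hwεsm.differentiable infNe) (ee i) q.1 q.2 s).deriv
          have hd2 : deriv (deriv h) 0 = Dv (ee i, 0) (Dv (ee i, 0) wε) (q.1, q.2) := by
            rw [hd1]
            have := (Dv_slice_x ((Dv_smooth hwεsm (ee i, 0)).differentiable infNe)
              (ee i) q.1 q.2 0).deriv
            rw [this]
            norm_num
          rw [hd2] at htest
          simpa using htest
        -- heat operator of wε at q
        have hheatwε : heatOp wε q = heatOp w q - ε := by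
          unfold heatOp lap
          have hDt : Dv ((0:E),1) wε q = Dv ((0:E),1) w q - ε := by
            rw [hDvε ((0:E),1)]; norm_num
          have hDi : ∀ i : Fin n, Dv (ee i, 0) wε = Dv (ee i, 0) w := by
            intro i; rw [hDvε (ee i, 0)]; funext p'; norm_num
          rw [hDt]
          have : ∀ i : Fin n, Dv (ee i, 0) (Dv (ee i, 0) wε) q
              = Dv (ee i, 0) (Dv (ee i, 0) w) q := by
            intro i; rw [hDi i]
          rw [Finset.sum_congr rfl (fun i _ => this i)]
          ring
        have h1 : 0 ≤ heatOp wε q := by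
          unfold heatOp
          have h2 : lap wε q ≤ 0 := Finset.sum_nonpos (fun i _ => hsd i)
          have : (0:ℝ) ≤ Dv ((0:E),1) wε q - lap wε q := by
            show (0:ℝ) ≤ Dv ((0:E),1) wε q - lap wε q
            linarith
          exact this
        have h3 : heatOp w q ≤ 0 := hsub q hball hIoc
        rw [hheatwε] at h1
        linarith
    -- conclude
    have hpK := hqmax p hp
    have hp2 : p.2 ∈ Icc a b := (mem_prod.1 hp).2
    have : w p - ε * (p.2 - a) ≤ M := le_trans hpK hqM
    have h4 : ε * (p.2 - a) ≤ ε * (b - a) := by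
      apply mul_le_mul_of_nonneg_left _ hε.le
      linarith [hp2.2]
    linarith
  by_contra hcon
  push_neg at hcon
  have hδ : 0 < (w p - M) / (2 * (b - a)) := div_pos (by linarith) (by linarith)
  have := key _ hδ
  have hba : b - a ≠ 0 := by linarith
  have h2 : (w p - M) / (2 * (b - a)) * (b - a) = (w p - M) / 2 := by
    field_simp
  rw [h2] at this
  linarith


lemma Dv_sq {F : P → ℝ} (hF : DifferentiableAt ℝ F p) (v : P) :
    Dv v (fun q => F q ^ 2) p = 2 * F p * Dv v F p := by
  have h : (fun q => F q ^ 2) = fun q => F q * F q := by funext q; ring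
  rw [h, Dv_mul hF hF]; ring

lemma heatOp_add {F G : P → ℝ} (hF : ContDiff ℝ (⊤:ℕ∞) F) (hG : ContDiff ℝ (⊤:ℕ∞) G) (p : P) :
    heatOp (fun q => F q + G q) p = heatOp F p + heatOp G p := by
  unfold heatOp lap
  rw [Dv_add (hF.differentiable infNe p) (hG.differentiable infNe p)]
  have : ∀ i : Fin n, Dv (ee i, 0) (Dv (ee i, 0) (fun q => F q + G q)) p
      = Dv (ee i,0) (Dv (ee i,0) F) p + Dv (ee i,0) (Dv (ee i,0) G) p := by
    intro i
    have h1 : Dv (ee i,0) (fun q => F q + G q)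
        = fun q => Dv (ee i,0) F q + Dv (ee i,0) G q := by
      funext q; exact Dv_add (hF.differentiable infNe q) (hG.differentiable infNe q) _
    rw [h1, Dv_add ((Dv_smooth hF _).differentiable infNe p)
      ((Dv_smooth hG _).differentiable infNe p)]
  rw [Finset.sum_congr rfl (fun i _ => this i), Finset.sum_add_distrib]
  ring

lemma heatOp_const_mul {F : P → ℝ} (hF : ContDiff ℝ (⊤:ℕ∞) F) (c : ℝ) (p : P) :
    heatOp (fun q => c * F q) p = c * heatOp F p := by
  unfold heatOp lap
  rw [Dv_const_mul (hF.differentiable infNe p)]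
  have : ∀ i : Fin n, Dv (ee i, 0) (Dv (ee i, 0) (fun q => c * F q)) p
      = c * Dv (ee i,0) (Dv (ee i,0) F) p := by
    intro i
    have h1 : Dv (ee i,0) (fun q => c * F q) = fun q => c * Dv (ee i,0) F q := by
      funext q; exact Dv_const_mul (hF.differentiable infNe q) c _
    rw [h1, Dv_const_mul ((Dv_smooth hF _).differentiable infNe p)]
  rw [Finset.sum_congr rfl (fun i _ => this i), ← Finset.mul_sum]
  ring

lemma heatOp_sum {ι : Type*} (s : Finset ι) {F : ι → P → ℝ}
    (hF : ∀ i, ContDiff ℝ (⊤:ℕ∞) (F i)) (p : P) :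
    heatOp (fun q => ∑ i ∈ s, F i q) p = ∑ i ∈ s, heatOp (F i) p := by
  classical
  induction s using Finset.induction with
  | empty =>
    simp only [Finset.sum_empty]
    unfold heatOp lap Dv
    simp [fderiv_const]
  | insert a s' hnotmem ih =>
    simp only [Finset.sum_insert hnotmem]
    rw [heatOp_add (hF a) (ContDiff.sum (fun i _ => hF i)) p, ih]

lemma Dv_snd_add_const (a : ℝ) (v : P) (p : P) :
    Dv v (fun q : P => q.2 + a) p = v.2 := by
  unfold Dv
  rw [((hasFDerivAt_snd (𝕜 := ℝ) (p := p)).add_const a).fderiv]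
  rfl

/-- The Bernstein-type gradient estimate at the top center of a unit cylinder. -/
lemma bernstein_core : ∃ Λ : ℝ, 1 ≤ Λ ∧ ∀ F : P → ℝ, ContDiff ℝ (⊤:ℕ∞) F → Caloric F →
    ∀ M : ℝ, (∀ p ∈ (closedBall (0:E) 1) ×ˢ (Icc (-1:ℝ) 0), |F p| ≤ M) →
    ∑ i : Fin n, (Dv (ee i, 0) F ((0:E), 0))^2 ≤ Λ * M^2 := by
  classical
  set φ : ContDiffBump (0 : E) := ⟨1/2, 1, by norm_num, by norm_num⟩ with hφdef
  set Φ : P → ℝ := fun p => φ p.1 with hΦdef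
  have hΦsm : ContDiff ℝ (⊤:ℕ∞) Φ := (φ.contDiff).comp contDiff_fst
  set ψ : P → ℝ := fun p => Φ p ^ 2 with hψdef
  have hψsm : ContDiff ℝ (⊤:ℕ∞) ψ := hΦsm.pow 2
  set bfun : P → ℝ := fun p => 2 * |Φ p * heatOp Φ p| + 8 * ∑ j : Fin n, Dv (ee j, 0) Φ p ^ 2
    with hbdef
  have hbcont : ContinuousOn bfun ((closedBall (0:E) 1) ×ˢ (Icc (-1:ℝ) 0)) := by
    apply Continuous.continuousOn
    apply Continuous.add
    · exact continuous_const.mul (continuous_abs.comp (hΦsm.continuous.mul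
        ((heatOp_smooth hΦsm).continuous)))
    · exact continuous_const.mul (continuous_finset_sum _ fun j _ =>
        ((Dv_smooth hΦsm _).continuous).pow 2)
  have hKcompact : IsCompact ((closedBall (0:E) 1) ×ˢ (Icc (-1:ℝ) 0)) :=
    (isCompact_closedBall _ _).prod isCompact_Icc
  obtain ⟨B, hB⟩ := hKcompact.exists_bound_of_continuousOn hbcont
  have hBnonneg : 0 ≤ B := by
    have h0 : ((0:E), (0:ℝ)) ∈ (closedBall (0:E) 1) ×ˢ (Icc (-1:ℝ) 0) := by
      simp
    exact le_trans (norm_nonneg _) (hB _ h0)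
  set Λ : ℝ := (B + 1) / 2 + 1 with hΛdef
  refine ⟨Λ, by simp [hΛdef]; linarith, ?_⟩
  intro F hFsm hFcal M hM
  have hMnonneg : 0 ≤ M := le_trans (abs_nonneg _) (hM ((0:E),(0:ℝ)) (by simp))
  set G : P → ℝ := fun p => ∑ i : Fin n, Dv (ee i, 0) F p ^ 2 with hGdef
  have hGsm : ContDiff ℝ (⊤:ℕ∞) G :=
    ContDiff.sum fun i _ => (Dv_smooth hFsm _).pow 2
  have hGnonneg : ∀ p : P, 0 ≤ G p := fun p => Finset.sum_nonneg fun i _ => sq_nonneg _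
  set τ : P → ℝ := fun p => p.2 + 1 with hτdef
  set w : P → ℝ := fun p => τ p * (ψ p * G p) + Λ * F p ^ 2 with hwdef
  have hτsm : ContDiff ℝ (⊤:ℕ∞) τ := contDiff_snd.add contDiff_const
  have hwsm : ContDiff ℝ (⊤:ℕ∞) w :=
    (hτsm.mul (hψsm.mul hGsm)).add (contDiff_const.mul (hFsm.pow 2))
  -- heat operator inequality
  have hkey : ∀ p : P, p ∈ (closedBall (0:E) 1) ×ˢ (Icc (-1:ℝ) 0) → p.2 ≤ 0 →
      heatOp w p ≤ 0 := by
    intro p hpK hp2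
    set Q : ℝ := ∑ i : Fin n, ∑ j : Fin n, Dv (ee j, 0) (Dv (ee i, 0) F) p ^ 2 with hQdef
    have hQnonneg : 0 ≤ Q := Finset.sum_nonneg fun i _ => Finset.sum_nonneg fun j _ =>
      sq_nonneg _
    -- heatOp G
    have hmulG : heatOp G p = -2 * Q := by
      rw [show G = fun q => ∑ i : Fin n, (fun q' => Dv (ee i,0) F q' ^ 2) q from rfl]
      rw [heatOp_sum Finset.univ (fun i => (Dv_smooth hFsm _).pow 2) p]
      have : ∀ i : Fin n, heatOp (fun q => Dv (ee i,0) F q ^ 2) p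
          = -2 * ∑ j : Fin n, Dv (ee j,0) (Dv (ee i,0) F) p ^ 2 := by
        intro i
        rw [heatOp_sq (Dv_smooth hFsm _) p]
        rw [caloric_Dv_spatial hFsm hFcal (ee i) p hp2]
        ring
      rw [Finset.sum_congr rfl (fun i _ => this i), hQdef, ← Finset.mul_sum]
    -- heatOp (ψ * G)
    have hmulψG : heatOp (fun q => ψ q * G q) p
        = ψ p * (-2 * Q) + G p * heatOp ψ p
          - 2 * ∑ j : Fin n, Dv (ee j,0) ψ p * Dv (ee j,0) G p := by
      rw [heatOp_mul hψsm hGsm p, hmulG]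
    -- bound the cross term
    have hDψ : ∀ j, Dv (ee j,0) ψ p = 2 * Φ p * Dv (ee j,0) Φ p := fun j =>
      Dv_sq (hΦsm.differentiable infNe p) _
    have hDG : ∀ j : Fin n, Dv (ee j,0) G p
        = ∑ i : Fin n, 2 * Dv (ee i,0) F p * Dv (ee j,0) (Dv (ee i,0) F) p := by
      intro j
      rw [show G = fun q => ∑ i : Fin n, (fun q' => Dv (ee i,0) F q' ^ 2) q from rfl]
      rw [Dv_sum Finset.univ (fun i _ => ((Dv_smooth hFsm _).pow 2).differentiable infNe p)]
      exact Finset.sum_congr rfl fun i _ =>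
        Dv_sq ((Dv_smooth hFsm _).differentiable infNe p) _
    have hcross : -2 * ∑ j : Fin n, Dv (ee j,0) ψ p * Dv (ee j,0) G p
        ≤ 2 * (ψ p * Q) + 8 * ((∑ j : Fin n, Dv (ee j,0) Φ p ^ 2) * G p) := by
      have hLHS : -2 * ∑ j : Fin n, Dv (ee j,0) ψ p * Dv (ee j,0) G p
          = ∑ j : Fin n, ∑ i : Fin n,
            (-8) * (Φ p * Dv (ee j,0) (Dv (ee i,0) F) p)
              * (Dv (ee j,0) Φ p * Dv (ee i,0) F p) := by
        rw [Finset.mul_sum]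
        refine Finset.sum_congr rfl fun j _ => ?_
        rw [hDψ j, hDG j, Finset.mul_sum, Finset.mul_sum]
        refine Finset.sum_congr rfl fun i _ => ?_
        ring
      have hRHS : 2 * (ψ p * Q) + 8 * ((∑ j : Fin n, Dv (ee j,0) Φ p ^ 2) * G p)
          = ∑ j : Fin n, ∑ i : Fin n,
            (2 * (Φ p * Dv (ee j,0) (Dv (ee i,0) F) p) ^ 2
              + 8 * (Dv (ee j,0) Φ p * Dv (ee i,0) F p) ^ 2) := by
        have e1 : 2 * (ψ p * Q)
            = ∑ j : Fin n, ∑ i : Fin n,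
              2 * (Φ p * Dv (ee j,0) (Dv (ee i,0) F) p) ^ 2 := by
          rw [hψdef, hQdef]
          rw [show (∑ i : Fin n, ∑ j : Fin n, Dv (ee j,0) (Dv (ee i,0) F) p ^ 2)
              = ∑ j : Fin n, ∑ i : Fin n, Dv (ee j,0) (Dv (ee i,0) F) p ^ 2 from
            Finset.sum_comm]
          rw [← mul_assoc, Finset.mul_sum]
          refine Finset.sum_congr rfl fun j _ => ?_
          rw [Finset.mul_sum]
          refine Finset.sum_congr rfl fun i _ => ?_
          ring
        have e2 : 8 * ((∑ j : Fin n, Dv (ee j,0) Φ p ^ 2) * G p)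
            = ∑ j : Fin n, ∑ i : Fin n,
              8 * (Dv (ee j,0) Φ p * Dv (ee i,0) F p) ^ 2 := by
          rw [hGdef, Finset.sum_mul_sum, Finset.mul_sum]
          refine Finset.sum_congr rfl fun j _ => ?_
          rw [Finset.mul_sum]
          refine Finset.sum_congr rfl fun i _ => ?_
          ring
        rw [e1, e2, ← Finset.sum_add_distrib]
        exact Finset.sum_congr rfl fun j _ => (Finset.sum_add_distrib).symm
      rw [hLHS, hRHS]
      refine Finset.sum_le_sum fun j _ => Finset.sum_le_sum fun i _ => ?_
      nlinarith [sq_nonneg (Φ p * Dv (ee j,0) (Dv (ee i,0) F) p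
        + 2 * (Dv (ee j,0) Φ p * Dv (ee i,0) F p))]
    -- bound on heatOp ψ contribution
    have hψle : ∀ q : P, 0 ≤ ψ q ∧ ψ q ≤ 1 := by
      intro q
      constructor
      · rw [hψdef]; exact sq_nonneg _
      · rw [hψdef, hΦdef]
        have h1 : |φ q.1| ≤ 1 := by
          rw [abs_of_nonneg φ.nonneg]; exact φ.le_one
        calc φ q.1 ^ 2 = |φ q.1| ^ 2 := by rw [sq_abs]
        _ ≤ 1 ^ 2 := by
            apply pow_le_pow_left₀ (abs_nonneg _) h1
        _ = 1 := one_pow 2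
    have hψG : heatOp (fun q => ψ q * G q) p ≤ bfun p * G p := by
      rw [hmulψG]
      have hhψ : heatOp ψ p = 2 * Φ p * heatOp Φ p - 2 * ∑ j : Fin n, Dv (ee j,0) Φ p ^ 2 := by
        rw [hψdef]; exact heatOp_sq hΦsm p
      have h1 : G p * heatOp ψ p ≤ 2 * |Φ p * heatOp Φ p| * G p := by
        have h2 : 2 * Φ p * heatOp Φ p - 2 * ∑ j : Fin n, Dv (ee j,0) Φ p ^ 2
            ≤ 2 * |Φ p * heatOp Φ p| := by
          have h3 : 2 * Φ p * heatOp Φ p ≤ 2 * |Φ p * heatOp Φ p| := by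
            rw [mul_assoc]
            have := le_abs_self (Φ p * heatOp Φ p)
            linarith
          have h4 : 0 ≤ 2 * ∑ j : Fin n, Dv (ee j,0) Φ p ^ 2 := by
            positivity
          linarith
        calc G p * heatOp ψ p ≤ G p * (2 * |Φ p * heatOp Φ p|) := by
              rw [hhψ]
              exact mul_le_mul_of_nonneg_left h2 (hGnonneg p)
        _ = 2 * |Φ p * heatOp Φ p| * G p := by ring
      have hcross' := hcross
      have hψQ : 0 ≤ ψ p * Q := mul_nonneg (hψle p).1 hQnonneg
      rw [hbdef]
      have expand : (2 * |Φ p * heatOp Φ p| + 8 * ∑ j : Fin n, Dv (ee j, 0) Φ p ^ 2) * G p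
          = 2 * |Φ p * heatOp Φ p| * G p
            + 8 * ((∑ j : Fin n, Dv (ee j, 0) Φ p ^ 2) * G p) := by ring
      rw [expand]
      have hψ2Q : ψ p * (-2 * Q) + 2 * (ψ p * Q) = 0 := by ring
      linarith
    -- heatOp of w
    have hwheat : heatOp w p ≤ (B + 1 - 2 * Λ) * G p := by
      have hsplit : heatOp w p
          = heatOp (fun q => τ q * (ψ q * G q)) p + heatOp (fun q => Λ * F q ^ 2) p := by
        rw [hwdef]
        exact heatOp_add (hτsm.mul (hψsm.mul hGsm)) (contDiff_const.mul (hFsm.pow 2)) p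
      have hτheat : heatOp τ p = 1 := by
        unfold heatOp lap
        have h1 : Dv ((0:E),1) τ p = 1 := by
          rw [hτdef, Dv_snd_add_const]
        have h2 : ∀ i : Fin n, Dv (ee i,0) (Dv (ee i,0) τ) p = 0 := by
          intro i
          have h3 : Dv (ee i,0) τ = fun _ => (0:ℝ) := by
            funext q; rw [hτdef, Dv_snd_add_const]
          rw [h3]
          unfold Dv
          rw [fderiv_fun_const]
          rfl
        rw [h1, Finset.sum_congr rfl (fun i _ => h2 i)]
        simp
      have hDτ : ∀ j : Fin n, Dv (ee j,0) τ p = 0 := by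
        intro j; rw [hτdef, Dv_snd_add_const]
      have hτmul : heatOp (fun q => τ q * (ψ q * G q)) p
          = τ p * heatOp (fun q => ψ q * G q) p + (ψ p * G p) := by
        rw [heatOp_mul hτsm (hψsm.mul hGsm) p, hτheat]
        have h5 : ∑ i : Fin n, Dv (ee i,0) τ p * Dv (ee i,0) (fun q => ψ q * G q) p = 0 := by
          apply Finset.sum_eq_zero
          intro i _
          rw [hDτ i, zero_mul]
        rw [h5]
        ring
      have hFsq : heatOp (fun q => Λ * F q ^ 2) p = -2 * Λ * G p := by
        rw [heatOp_const_mul (hFsm.pow 2) Λ p, heatOp_sq hFsm p, hFcal p hp2, hGdef]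
        ring
      rw [hsplit, hτmul, hFsq]
      -- bounds : τ p ∈ [0,1]
      have hτb : 0 ≤ τ p ∧ τ p ≤ 1 := by
        have h6 := (mem_prod.1 hpK).2
        have h7 : τ p = p.2 + 1 := rfl
        rw [h7]
        exact ⟨by linarith [h6.1], by linarith [h6.2]⟩
      have hbB : bfun p ≤ B := by
        have := hB p hpK
        calc bfun p ≤ |bfun p| := le_abs_self _
        _ = ‖bfun p‖ := rfl
        _ ≤ B := this
      have hbfunnn : 0 ≤ bfun p := by
        rw [hbdef]; positivity
      have hBG : heatOp (fun q => ψ q * G q) p ≤ B * G p :=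
        le_trans hψG (mul_le_mul_of_nonneg_right hbB (hGnonneg p))
      have hτX : τ p * heatOp (fun q => ψ q * G q) p ≤ B * G p := by
        calc τ p * heatOp (fun q => ψ q * G q) p ≤ τ p * (B * G p) :=
              mul_le_mul_of_nonneg_left hBG hτb.1
        _ ≤ 1 * (B * G p) := by
            apply mul_le_mul_of_nonneg_right hτb.2
            exact mul_nonneg (le_trans hbfunnn hbB) (hGnonneg p)
        _ = B * G p := one_mul _
      have hψGle : ψ p * G p ≤ G p := by
        calc ψ p * G p ≤ 1 * G p :=
              mul_le_mul_of_nonneg_right (hψle p).2 (hGnonneg p)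
        _ = G p := one_mul _
      linarith
    have : (B + 1 - 2 * Λ) * G p ≤ 0 := by
      apply mul_nonpos_of_nonpos_of_nonneg _ (hGnonneg p)
      rw [hΛdef]; linarith
    linarith
  -- apply the maximum principle
  have hmax := maxprin hwsm (0:E) (by norm_num : (0:ℝ) < 1) (by norm_num : (-1:ℝ) < 0)
    (fun p hp1 hp2 => hkey p ⟨ball_subset_closedBall hp1, Ioc_subset_Icc_self hp2⟩ hp2.2)
    (M := Λ * M ^ 2) ?_ ?_
  · have h00 : ((0:E), (0:ℝ)) ∈ (closedBall (0:E) 1) ×ˢ (Icc (-1:ℝ) 0) := by simp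
    have := hmax _ h00
    have hw00 : w ((0:E), 0) = τ ((0:E),0) * (ψ ((0:E),0) * G ((0:E),0))
        + Λ * F ((0:E),0) ^ 2 := rfl
    have hτ00 : τ ((0:E), (0:ℝ)) = 1 := by rw [hτdef]; norm_num
    have hψ00 : ψ ((0:E), (0:ℝ)) = 1 := by
      rw [hψdef, hΦdef]
      have : φ (0:E) = 1 := φ.one_of_mem_closedBall (by
        simp [hφdef])
      simp only [this]
      norm_num
    have hG00 : G ((0:E),0) ≤ w ((0:E),0) := by
      rw [hw00, hτ00, hψ00]
      have : 0 ≤ Λ * F ((0:E),0) ^ 2 :=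
        mul_nonneg (by rw [hΛdef]; linarith) (sq_nonneg _)
      linarith
    exact le_trans hG00 this
  · -- bottom
    intro x hx
    have hτbot : τ (x, (-1:ℝ)) = 0 := by rw [hτdef]; norm_num
    have hwbot : w (x, -1) = Λ * F (x,-1) ^ 2 := by
      show τ (x,-1) * (ψ (x,-1) * G (x,-1)) + Λ * F (x,-1) ^ 2 = _
      rw [hτbot]; ring
    rw [hwbot]
    have hFM : |F (x,-1)| ≤ M := hM (x,-1) ⟨hx, by norm_num⟩
    have : F (x,-1) ^ 2 ≤ M ^ 2 := by
      rw [← sq_abs]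
      apply pow_le_pow_left₀ (abs_nonneg _) hFM
    apply mul_le_mul_of_nonneg_left this
    rw [hΛdef]; linarith
  · -- lateral
    intro x hdx t ht
    have hφx : φ x = 0 := φ.zero_of_le_dist (by rw [hdx])
    have hψx : ψ (x, t) = 0 := by rw [hψdef, hΦdef]; simp [hφx]
    have hwlat : w (x,t) = Λ * F (x,t) ^ 2 := by
      show τ (x,t) * (ψ (x,t) * G (x,t)) + Λ * F (x,t) ^ 2 = _
      rw [hψx]; ring
    rw [hwlat]
    have hFM : |F (x,t)| ≤ M := hM (x,t) ⟨by simpa [hdx] using le_refl (1:ℝ), ht⟩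
    have : F (x,t) ^ 2 ≤ M ^ 2 := by
      rw [← sq_abs]
      apply pow_le_pow_left₀ (abs_nonneg _) hFM
    apply mul_le_mul_of_nonneg_left this
    rw [hΛdef]; linarith

/-- translation -/
lemma Dv_translate {F : P → ℝ} (hF : ContDiff ℝ (⊤:ℕ∞) F) (c : P) (v : P) (p : P) :
    Dv v (fun q => F (q + c)) p = Dv v F (p + c) := by
  unfold Dv
  have hT : HasFDerivAt (fun q : P => q + c) (ContinuousLinearMap.id ℝ (P)) p :=
    (hasFDerivAt_id p).add_const c
  have hcomp : HasFDerivAt (fun q => F (q + c)) ((fderiv ℝ F (p + c)).comp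
      (ContinuousLinearMap.id ℝ (P))) p :=
    ((hF.differentiable infNe (p + c)).hasFDerivAt).comp p hT
  rw [hcomp.fderiv]
  rfl

lemma heatOp_translate {F : P → ℝ} (hF : ContDiff ℝ (⊤:ℕ∞) F) (c : P) (p : P) :
    heatOp (fun q => F (q + c)) p = heatOp F (p + c) := by
  unfold heatOp lap
  have h1 : Dv ((0:E),1) (fun q => F (q + c)) p = Dv ((0:E),1) F (p + c) :=
    Dv_translate hF c _ p
  have h2 : ∀ i : Fin n, Dv (ee i,0) (Dv (ee i,0) (fun q => F (q + c))) p
      = Dv (ee i,0) (Dv (ee i,0) F) (p + c) := by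
    intro i
    have h3 : Dv (ee i,0) (fun q => F (q + c)) = fun q => Dv (ee i,0) F (q + c) := by
      funext q; exact Dv_translate hF c _ q
    rw [h3, Dv_translate (Dv_smooth hF _) c _ p]
  rw [h1, Finset.sum_congr rfl (fun i _ => h2 i)]

lemma caloric_translate {F : P → ℝ} (hF : ContDiff ℝ (⊤:ℕ∞) F) (hc : Caloric F)
    {c : P} (hc2 : c.2 ≤ 0) : Caloric (fun q => F (q + c)) := by
  intro p hp
  rw [heatOp_translate hF c p]
  apply hc
  have : (p + c).2 = p.2 + c.2 := rfl
  rw [this]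
  linarith

/-- general-position gradient estimate -/
lemma grad_est {Λ : ℝ} (hΛ1 : 1 ≤ Λ)
    (hΛ : ∀ F : P → ℝ, ContDiff ℝ (⊤:ℕ∞) F → Caloric F →
      ∀ M : ℝ, (∀ p ∈ (closedBall (0:E) 1) ×ˢ (Icc (-1:ℝ) 0), |F p| ≤ M) →
      ∑ i : Fin n, (Dv (ee i, 0) F ((0:E), 0))^2 ≤ Λ * M^2)
    {F : P → ℝ} (hF : ContDiff ℝ (⊤:ℕ∞) F) (hcal : Caloric F)
    (x₀ : E) (t₀ : ℝ) (ht₀ : t₀ ≤ 0) {M : ℝ}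
    (hM : ∀ p ∈ (closedBall x₀ 1) ×ˢ (Icc (t₀-1) t₀), |F p| ≤ M) (i : Fin n) :
    |Dv (ee i, 0) F (x₀, t₀)| ≤ Λ * M := by
  set c : P := (x₀, t₀) with hcdef
  set F' : P → ℝ := fun q => F (q + c) with hF'def
  have hF'sm : ContDiff ℝ (⊤:ℕ∞) F' := hF.comp (contDiff_id.add contDiff_const)
  have hF'cal : Caloric F' := caloric_translate hF hcal ht₀
  have hM' : ∀ p ∈ (closedBall (0:E) 1) ×ˢ (Icc (-1:ℝ) 0), |F' p| ≤ M := by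
    intro p hp
    apply hM
    constructor
    · have h1 : (p + c).1 = p.1 + x₀ := rfl
      rw [h1]
      have := (mem_prod.1 hp).1
      rw [mem_closedBall] at this ⊢
      calc dist (p.1 + x₀) x₀ = ‖p.1‖ := by
            rw [dist_eq_norm]; simp
      _ = dist p.1 0 := by rw [dist_eq_norm]; simp
      _ ≤ 1 := this
    · have h2 : (p + c).2 = p.2 + t₀ := rfl
      rw [h2]
      have := (mem_prod.1 hp).2
      constructor
      · linarith [this.1]
      · linarith [this.2]
  have key := hΛ F' hF'sm hF'cal M hM'
  have hone : ∀ v : P, Dv v F' ((0:E), (0:ℝ)) = Dv v F (x₀, t₀) := by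
    intro v
    rw [hF'def, Dv_translate hF c v]
    congr 1
    rw [hcdef]
    ext <;> simp
  have hMnn : 0 ≤ M := le_trans (abs_nonneg _)
    (hM (x₀, t₀) ⟨mem_closedBall_self (by norm_num), by constructor <;> linarith⟩)
  have hsingle : (Dv (ee i,0) F (x₀,t₀))^2 ≤ Λ * M^2 := by
    rw [← hone (ee i, 0)]
    refine le_trans ?_ key
    exact Finset.single_le_sum (f := fun j => (Dv (ee j,0) F' ((0:E),0))^2)
      (fun j _ => sq_nonneg _) (Finset.mem_univ i)
  have hsq : (Dv (ee i,0) F (x₀,t₀))^2 ≤ (Λ * M)^2 := by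
    nlinarith
  calc |Dv (ee i,0) F (x₀,t₀)| = Real.sqrt ((Dv (ee i,0) F (x₀,t₀))^2) :=
        (Real.sqrt_sq_eq_abs _).symm
  _ ≤ Real.sqrt ((Λ * M)^2) := Real.sqrt_le_sqrt hsq
  _ = Λ * M := Real.sqrt_sq (by positivity)

/-- time-derivative estimate -/
lemma time_est {Λ : ℝ} (hΛ1 : 1 ≤ Λ)
    (hΛ : ∀ F : P → ℝ, ContDiff ℝ (⊤:ℕ∞) F → Caloric F →
      ∀ M : ℝ, (∀ p ∈ (closedBall (0:E) 1) ×ˢ (Icc (-1:ℝ) 0), |F p| ≤ M) →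
      ∑ i : Fin n, (Dv (ee i, 0) F ((0:E), 0))^2 ≤ Λ * M^2)
    {F : P → ℝ} (hF : ContDiff ℝ (⊤:ℕ∞) F) (hcal : Caloric F)
    (x₀ : E) (t₀ : ℝ) (ht₀ : t₀ ≤ 0) {M : ℝ}
    (hM : ∀ p ∈ (closedBall x₀ 2) ×ˢ (Icc (t₀-2) t₀), |F p| ≤ M) :
    |Dv ((0:E), 1) F (x₀, t₀)| ≤ (n : ℝ) * Λ^2 * M := by
  have hMnn : 0 ≤ M := le_trans (abs_nonneg _)
    (hM (x₀, t₀) ⟨mem_closedBall_self (by norm_num), by constructor <;> linarith⟩)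
  -- first: |D_i F| ≤ Λ M on the unit cylinder
  have hgrad : ∀ i : Fin n, ∀ y : E, ∀ s : ℝ, y ∈ closedBall x₀ 1 → s ∈ Icc (t₀-1) t₀ →
      |Dv (ee i,0) F (y, s)| ≤ Λ * M := by
    intro i y s hy hs
    apply grad_est hΛ1 hΛ hF hcal y s (le_trans hs.2 ht₀)
    intro p hp
    apply hM
    obtain ⟨hp1, hp2⟩ := mem_prod.1 hp
    constructor
    · rw [mem_closedBall] at hy hp1 ⊢
      calc dist p.1 x₀ ≤ dist p.1 y + dist y x₀ := dist_triangle _ _ _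
      _ ≤ 1 + 1 := add_le_add hp1 hy
      _ = 2 := by norm_num
    · constructor
      · linarith [hp2.1, hs.1]
      · linarith [hp2.2, hs.2]
  -- second derivatives at the center
  have hsec : ∀ i : Fin n, |Dv (ee i,0) (Dv (ee i,0) F) (x₀,t₀)| ≤ Λ * (Λ * M) := by
    intro i
    apply grad_est hΛ1 hΛ (Dv_smooth hF _) (caloric_Dv_spatial hF hcal _) x₀ t₀ ht₀
    intro p hp
    obtain ⟨hp1, hp2⟩ := mem_prod.1 hp
    have := hgrad i p.1 p.2 hp1 hp2
    simpa using this
  have hDt : Dv ((0:E),1) F (x₀,t₀) = lap F (x₀,t₀) := by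
    have := hcal (x₀,t₀) ht₀
    unfold heatOp at this
    linarith
  rw [hDt]
  calc |lap F (x₀,t₀)| ≤ ∑ i : Fin n, |Dv (ee i,0) (Dv (ee i,0) F) (x₀,t₀)| :=
        Finset.abs_sum_le_sum_abs _ _
  _ ≤ ∑ _i : Fin n, Λ * (Λ * M) := Finset.sum_le_sum fun i _ => hsec i
  _ = (n:ℝ) * (Λ * (Λ * M)) := by rw [Finset.sum_const, Finset.card_univ, Fintype.card_fin,
        nsmul_eq_mul]
  _ = (n:ℝ) * Λ^2 * M := by ring

/-- iterated time derivative -/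
noncomputable def DtIter : ℕ → (P → ℝ) → (P → ℝ)
  | 0, U => U
  | (j+1), U => Dv ((0:E),1) (DtIter j U)

lemma DtIter_smooth {U : P → ℝ} (hU : ContDiff ℝ (⊤:ℕ∞) U) (j : ℕ) :
    ContDiff ℝ (⊤:ℕ∞) (DtIter j U) := by
  induction j with
  | zero => exact hU
  | succ j ih => exact Dv_smooth ih _

lemma DtIter_caloric {U : P → ℝ} (hU : ContDiff ℝ (⊤:ℕ∞) U) (hcal : Caloric U) (j : ℕ) :
    Caloric (DtIter j U) := by
  induction j with
  | zero => exact hcal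
  | succ j ih => exact caloric_Dt (DtIter_smooth hU j) ih

/-- the derivative growth ladder -/
lemma ladder {U : P → ℝ} (hU : ContDiff ℝ (⊤:ℕ∞) U) (hcal : Caloric U)
    {A₁ A₂ : ℝ} (hA₁ : 0 < A₁) (hA₂ : 0 < A₂)
    (hg : ∀ p : P, p.2 ≤ 0 → |U p| ≤ A₁ * Real.exp (A₂ * (‖p.1‖ + |p.2|))) :
    ∃ C : ℝ, 1 ≤ C ∧ ∀ j : ℕ, ∀ p : P, p.2 ≤ 0 →
      |DtIter j U p| ≤ A₁ * Real.exp (A₂ * (‖p.1‖ + |p.2|)) * C ^ j := by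
  obtain ⟨Λ, hΛ1, hΛ⟩ := bernstein_core (n := n)
  set C : ℝ := ((n:ℝ) * Λ^2 + 1) * Real.exp (4 * A₂) with hCdef
  have hexp1 : 1 ≤ Real.exp (4 * A₂) := by
    rw [show (1:ℝ) = Real.exp 0 from (Real.exp_zero).symm]
    apply Real.exp_le_exp.2
    positivity
  have hC1 : 1 ≤ C := by
    have h1 : 1 ≤ (n:ℝ) * Λ^2 + 1 := by
      have : (0:ℝ) ≤ (n:ℝ) * Λ^2 := by positivity
      linarith
    calc (1:ℝ) = 1 * 1 := by norm_num
    _ ≤ ((n:ℝ) * Λ^2 + 1) * Real.exp (4 * A₂) := mul_le_mul h1 hexp1 (by norm_num) (by positivity)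
  refine ⟨C, hC1, ?_⟩
  intro j
  induction j with
  | zero =>
    intro p hp
    simpa [DtIter] using hg p hp
  | succ j ih =>
    intro p hp
    obtain ⟨x, t⟩ := p
    simp only at hp
    have hstep : |Dv ((0:E),1) (DtIter j U) (x, t)|
        ≤ (n:ℝ) * Λ^2 * (A₁ * Real.exp (A₂ * (‖x‖ + |t|)) * Real.exp (4*A₂) * C ^ j) := by
      apply time_est hΛ1 hΛ (DtIter_smooth hU j) (DtIter_caloric hU hcal j) x t hp
      intro q hq
      obtain ⟨hq1, hq2⟩ := mem_prod.1 hq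
      have hq2' : q.2 ≤ 0 := le_trans hq2.2 hp
      have hb := ih q hq2'
      have hnorm : ‖q.1‖ ≤ ‖x‖ + 2 := by
        rw [mem_closedBall] at hq1
        calc ‖q.1‖ = ‖x + (q.1 - x)‖ := by congr 1; abel
        _ ≤ ‖x‖ + ‖q.1 - x‖ := norm_add_le _ _
        _ ≤ ‖x‖ + 2 := by
            have : ‖q.1 - x‖ = dist q.1 x := (dist_eq_norm _ _).symm
            linarith [hq1, this ▸ hq1]
      have habs : |q.2| ≤ |t| + 2 := by
        rw [abs_of_nonpos hq2', abs_of_nonpos hp]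
        linarith [hq2.1]
      have hmono : Real.exp (A₂ * (‖q.1‖ + |q.2|))
          ≤ Real.exp (A₂ * (‖x‖ + |t|)) * Real.exp (4*A₂) := by
        rw [← Real.exp_add]
        apply Real.exp_le_exp.2
        nlinarith
      calc |DtIter j U q| ≤ A₁ * Real.exp (A₂ * (‖q.1‖ + |q.2|)) * C ^ j := hb
      _ ≤ A₁ * (Real.exp (A₂ * (‖x‖ + |t|)) * Real.exp (4*A₂)) * C ^ j := by
          apply mul_le_mul_of_nonneg_right _ (by positivity)
          exact mul_le_mul_of_nonneg_left hmono hA₁.le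
      _ = A₁ * Real.exp (A₂ * (‖x‖ + |t|)) * Real.exp (4*A₂) * C ^ j := by ring
    have hfin : (n:ℝ) * Λ^2 * (A₁ * Real.exp (A₂ * (‖x‖ + |t|)) * Real.exp (4*A₂) * C ^ j)
        ≤ A₁ * Real.exp (A₂ * (‖x‖ + |t|)) * C ^ (j+1) := by
      rw [hCdef]
      have h2 : (0:ℝ) ≤ A₁ * Real.exp (A₂ * (‖x‖ + |t|)) := by positivity
      have h3 : (n:ℝ) * Λ^2 ≤ (n:ℝ) * Λ^2 + 1 := by linarith
      calc (n:ℝ) * Λ^2 * (A₁ * Real.exp (A₂ * (‖x‖ + |t|)) * Real.exp (4*A₂) * C ^ j)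
          ≤ ((n:ℝ) * Λ^2 + 1) * (A₁ * Real.exp (A₂ * (‖x‖ + |t|)) * Real.exp (4*A₂) * C ^ j) := by
            apply mul_le_mul_of_nonneg_right h3 (by positivity)
      _ = A₁ * Real.exp (A₂ * (‖x‖ + |t|)) * ((((n:ℝ) * Λ^2 + 1) * Real.exp (4*A₂)) * C ^ j) := by
            ring
      _ = A₁ * Real.exp (A₂ * (‖x‖ + |t|)) * (C * C ^ j) := by rw [hCdef]
      _ = A₁ * Real.exp (A₂ * (‖x‖ + |t|)) * C ^ (j+1) := by rw [pow_succ]; ring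
    exact le_trans hstep hfin

lemma slice_fderiv {U : P → ℝ} (hU : ContDiff ℝ (⊤:ℕ∞) U) (t : ℝ) (x : E) (wv : E) :
    fderiv ℝ (fun y => U (y, t)) x wv = Dv (wv, 0) U (x, t) := by
  have hι : HasFDerivAt (fun y : E => (y, t))
      ((ContinuousLinearMap.id ℝ (E)).prod (0 : (E) →L[ℝ] ℝ)) x :=
    (hasFDerivAt_id x).prodMk (hasFDerivAt_const t x)
  have hcomp : HasFDerivAt (fun y => U (y, t))
      ((fderiv ℝ U (x, t)).comp ((ContinuousLinearMap.id ℝ (E)).prod (0 : (E) →L[ℝ] ℝ))) x :=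
    ((hU.differentiable infNe (x, t)).hasFDerivAt).comp x hι
  rw [hcomp.fderiv]
  rfl

lemma slice_smooth {U : P → ℝ} (hU : ContDiff ℝ (⊤:ℕ∞) U) (t : ℝ) :
    ContDiff ℝ (⊤:ℕ∞) (fun y => U (y, t)) :=
  hU.comp (contDiff_id.prodMk contDiff_const)

lemma spatialLaplacian_eq_lap {U : P → ℝ} (hU : ContDiff ℝ (⊤:ℕ∞) U) (t : ℝ) (x : E) :
    (∑ i : Fin n, iteratedFDeriv ℝ 2 (fun y => U (y, t)) x
      ![EuclideanSpace.single i 1, EuclideanSpace.single i 1]) = lap U (x, t) := by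
  unfold lap
  refine Finset.sum_congr rfl fun i _ => ?_
  set g : E → ℝ := fun y => U (y, t) with hgdef
  have hgsm : ContDiff ℝ (⊤:ℕ∞) g := slice_smooth hU t
  rw [iteratedFDeriv_two_apply]
  have hm0 : (![EuclideanSpace.single i (1:ℝ), EuclideanSpace.single i 1] : Fin 2 → E) 0
      = EuclideanSpace.single i 1 := rfl
  have hm1 : (![EuclideanSpace.single i (1:ℝ), EuclideanSpace.single i 1] : Fin 2 → E) 1
      = EuclideanSpace.single i 1 := rfl
  rw [hm0, hm1]
  -- fderiv (fderiv g) x e e = Dv (e,0) (Dv (e,0) U) (x,t)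
  have hA : (fun y => fderiv ℝ g y (EuclideanSpace.single i 1))
      = fun y => Dv (ee i, 0) U (y, t) := by
    funext y
    exact slice_fderiv hU t y (EuclideanSpace.single i 1)
  have hdg : Differentiable ℝ (fderiv ℝ g) :=
    (hgsm.fderiv_right infSucc).differentiable infNe
  have hswap : fderiv ℝ (fderiv ℝ g) x (EuclideanSpace.single i 1) (EuclideanSpace.single i 1)
      = fderiv ℝ (fun y => fderiv ℝ g y (EuclideanSpace.single i 1)) x
        (EuclideanSpace.single i 1) := by
    rw [fderiv_clm_apply (hdg x) (differentiableAt_const _)]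
    simp
  rw [hswap, hA]
  have := slice_fderiv (Dv_smooth hU (ee i, 0)) t x (EuclideanSpace.single i 1)
  rw [show (fun y => Dv (ee i, 0) U (y, t)) = fun y => (Dv (ee i,0) U) (y, t) from rfl, this]
  rfl

lemma iter_link {U : P → ℝ} (hU : ContDiff ℝ (⊤:ℕ∞) U) (x : E) (j : ℕ) (t : ℝ) :
    iteratedDeriv j (fun s => U (x, s)) t = DtIter j U (x, t) := by
  induction j generalizing t with
  | zero => rw [iteratedDeriv_zero]; rfl
  | succ j ih =>
    rw [iteratedDeriv_succ]
    have h1 : iteratedDeriv j (fun s => U (x, s)) = fun s => DtIter j U (x, s) :=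
      funext fun s => ih s
    rw [h1]
    exact (Dv_slice_t ((DtIter_smooth hU j).differentiable infNe) x t).deriv

lemma smooth_iteratedDeriv {f : ℝ → ℝ} (hf : ContDiff ℝ (⊤:ℕ∞) f) (k : ℕ) :
    ContDiff ℝ (⊤:ℕ∞) (iteratedDeriv k f) := by
  rw [iteratedDeriv_eq_iterate]
  exact hf.iterate_deriv k

lemma iterWithin {f : ℝ → ℝ} (hf : ContDiff ℝ (⊤:ℕ∞) f) {a b : ℝ} (hab : a < b) (k : ℕ) :
    ∀ x ∈ Icc a b, iteratedDerivWithin k f (Icc a b) x = iteratedDeriv k f x := by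
  induction k with
  | zero => intro x _; rw [iteratedDerivWithin_zero, iteratedDeriv_zero]
  | succ k ih =>
    intro x hx
    have hud : UniqueDiffOn ℝ (Icc a b) := uniqueDiffOn_Icc hab
    rw [iteratedDerivWithin_succ]
    have hcongr : derivWithin (iteratedDerivWithin k f (Icc a b)) (Icc a b) x
        = derivWithin (iteratedDeriv k f) (Icc a b) x :=
      derivWithin_congr ih (ih x hx)
    rw [hcongr]
    have hdiff : DifferentiableAt ℝ (iteratedDeriv k f) x :=
      (smooth_iteratedDeriv hf k).differentiable infNe x
    rw [hdiff.derivWithin (hud x hx)]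
    rw [iteratedDeriv_succ]

/-- Taylor's theorem on `[t, 0]` with center `0`, `t < 0`. -/
lemma taylor_left {f : ℝ → ℝ} (hf : ContDiff ℝ (⊤:ℕ∞) f) {t : ℝ} (ht : t < 0) (m : ℕ) :
    ∃ ξ ∈ Ioo t 0, f t - ∑ i ∈ Finset.range (m+1), iteratedDeriv i f 0 * t ^ i / (i.factorial : ℝ)
      = iteratedDeriv (m+1) f ξ * t ^ (m+1) / ((m+1).factorial : ℝ) := by
  set g : ℝ → ℝ := fun s => f (-s) with hgdef
  have hgsm : ContDiff ℝ (⊤:ℕ∞) g := hf.comp contDiff_neg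
  have hlt : (0:ℝ) < -t := by linarith
  have hcd : ContDiffOn ℝ m g (Icc 0 (-t)) :=
    (hgsm.of_le (by exact_mod_cast le_top)).contDiffOn
  have hdiff : DifferentiableOn ℝ (iteratedDerivWithin m g (Icc 0 (-t))) (Ioo 0 (-t)) := by
    have h1 : DifferentiableOn ℝ (iteratedDeriv m g) (Ioo 0 (-t)) :=
      ((smooth_iteratedDeriv hgsm m).differentiable infNe).differentiableOn
    exact h1.congr (fun y hy => iterWithin hgsm hlt m y (Ioo_subset_Icc_self hy))
  have hI : uIcc 0 (-t) = Icc 0 (-t) := uIcc_of_le hlt.le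
  have hO : uIoo 0 (-t) = Ioo 0 (-t) := uIoo_of_le hlt.le
  obtain ⟨ξ', hξ'mem, hξ'⟩ := taylor_mean_remainder_lagrange hlt.ne
    (by rw [hI]; exact hcd) (by rw [hI, hO]; exact hdiff)
  rw [hO] at hξ'mem
  rw [hI] at hξ'
  refine ⟨-ξ', ⟨by linarith [hξ'mem.2], by linarith [hξ'mem.1]⟩, ?_⟩
  have h0mem : (0:ℝ) ∈ Icc 0 (-t) := ⟨le_refl 0, hlt.le⟩
  have hξ'Icc : ξ' ∈ Icc 0 (-t) := Ioo_subset_Icc_self hξ'mem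
  have htay : taylorWithinEval g m (Icc 0 (-t)) 0 (-t)
      = ∑ i ∈ Finset.range (m+1), iteratedDeriv i f 0 * t ^ i / (i.factorial : ℝ) := by
    rw [taylor_within_apply]
    refine Finset.sum_congr rfl fun i _ => ?_
    rw [iterWithin hgsm hlt i 0 h0mem]
    have hneg : iteratedDeriv i g 0 = (-1:ℝ)^i * iteratedDeriv i f 0 := by
      rw [hgdef, iteratedDeriv_comp_neg]
      norm_num
    rw [hneg, smul_eq_mul, sub_zero, neg_pow]
    have hsq : ((-1:ℝ)^i) * ((-1:ℝ)^i) = 1 := by rw [← mul_pow]; norm_num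
    have hfac : ((i.factorial : ℝ)) ≠ 0 := by
      exact_mod_cast i.factorial_ne_zero
    field_simp
    linear_combination (iteratedDeriv i f 0 * t ^ i) * hsq
  have hrem : iteratedDerivWithin (m+1) g (Icc 0 (-t)) ξ'
      = (-1:ℝ)^(m+1) * iteratedDeriv (m+1) f (-ξ') := by
    rw [iterWithin hgsm hlt (m+1) ξ' hξ'Icc, hgdef, iteratedDeriv_comp_neg]
    norm_num
  have hgt : g (-t) = f t := by rw [hgdef]; norm_num
  rw [htay, hgt, hrem] at hξ'
  rw [hξ', sub_zero, neg_pow]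
  have hsq : ((-1:ℝ)^(m+1)) * ((-1:ℝ)^(m+1)) = 1 := by rw [← mul_pow]; norm_num
  have hfac : (((m+1).factorial : ℝ)) ≠ 0 := by
    exact_mod_cast (m+1).factorial_ne_zero
  field_simp
  linear_combination (iteratedDeriv (m+1) f (-ξ') * t ^ (m+1)) * hsq

lemma tslice_smooth {U : P → ℝ} (hU : ContDiff ℝ (⊤:ℕ∞) U) (x : E) :
    ContDiff ℝ (⊤:ℕ∞) (fun s : ℝ => U (x, s)) :=
  hU.comp (contDiff_const.prodMk contDiff_id)

end

/-- The spatial Laplacian of `f : ℝⁿ → ℝ`: the sum of the second partial derivatives. -/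
noncomputable def spatialLaplacian {n : ℕ} (f : EuclideanSpace ℝ (Fin n) → ℝ)
    (x : EuclideanSpace ℝ (Fin n)) : ℝ :=
  ∑ i : Fin n, iteratedFDeriv ℝ 2 f x ![EuclideanSpace.single i 1, EuclideanSpace.single i 1]

theorem stmt_1 (n : ℕ) (A₁ A₂ : ℝ) (hA₁ : 0 < A₁) (hA₂ : 0 < A₂)
    (u : EuclideanSpace ℝ (Fin n) → ℝ → ℝ)
    (hsmooth : ContDiff ℝ (⊤ : ℕ∞) (fun p : EuclideanSpace ℝ (Fin n) × ℝ => u p.1 p.2))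
    (hheat : ∀ x t, t ≤ 0 → spatialLaplacian (fun y => u y t) x - deriv (u x) t = 0)
    (hgrowth : ∀ x t, t ≤ 0 → |u x t| ≤ A₁ * Real.exp (A₂ * (‖x‖ + |t|))) :
    (∀ x, ∀ t : ℝ, t ≤ 0 →
        HasSum (fun j : ℕ => iteratedDeriv j (u x) 0 * t ^ j / (Nat.factorial j : ℝ)) (u x t)) ∧
    (∀ R : ℝ, 1 ≤ R →
      TendstoUniformlyOn
        (fun (j : ℕ) (p : EuclideanSpace ℝ (Fin n) × ℝ) =>
          ∑ i ∈ Finset.range j, iteratedDeriv i (u p.1) 0 * p.2 ^ i / (Nat.factorial i : ℝ))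
        (fun p => u p.1 p.2) atTop
        ((Metric.closedBall (0 : EuclideanSpace ℝ (Fin n)) R) ×ˢ (Set.Icc (-R) 0))) := by
  set U : EuclideanSpace ℝ (Fin n) × ℝ → ℝ := fun p => u p.1 p.2 with hUdef
  have hU : ContDiff ℝ (⊤:ℕ∞) U := hsmooth.of_le (by simp)
  -- caloricity
  have hcal : Caloric U := by
    intro p hp
    obtain ⟨x0, t0⟩ := p
    simp only at hp
    have hh := hheat x0 t0 hp
    unfold spatialLaplacian at hh
    have h1 : (∑ i : Fin n, iteratedFDeriv ℝ 2 (fun y => u y t0) x0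
        ![EuclideanSpace.single i 1, EuclideanSpace.single i 1]) = lap U (x0, t0) := by
      have := spatialLaplacian_eq_lap hU t0 x0
      exact this
    have h2' := (Dv_slice_t (hU.differentiable infNe) x0 t0).deriv
    have heta : (fun t => U (x0, t)) = u x0 := rfl
    rw [heta] at h2'
    unfold heatOp
    rw [← h2', ← h1]
    linarith
  have hgrow' : ∀ p : EuclideanSpace ℝ (Fin n) × ℝ, p.2 ≤ 0 →
      |U p| ≤ A₁ * Real.exp (A₂ * (‖p.1‖ + |p.2|)) := fun p hp => hgrowth p.1 p.2 hp
  obtain ⟨C, hC1, hlad⟩ := ladder hU hcal hA₁ hA₂ hgrow'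
  have hC0 : (0:ℝ) ≤ C := by linarith
  -- identification of iterated time derivatives
  have hlink : ∀ x, ∀ j : ℕ, ∀ s : ℝ, iteratedDeriv j (u x) s = DtIter j U (x, s) := by
    intro x j s
    exact iter_link hU x j s
  -- the remainder bound
  have hrem : ∀ x, ∀ t : ℝ, t ≤ 0 → ∀ j : ℕ,
      |u x t - ∑ i ∈ Finset.range j, iteratedDeriv i (u x) 0 * t ^ i / (Nat.factorial i : ℝ)|
        ≤ A₁ * Real.exp (A₂ * (‖x‖ + |t|)) * (C * |t|) ^ j / (Nat.factorial j : ℝ) := by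
    intro x t ht j
    match j with
    | 0 =>
      simp only [Finset.range_zero, Finset.sum_empty, sub_zero, pow_zero, Nat.factorial_zero,
        Nat.cast_one, div_one, mul_one]
      exact hgrowth x t ht
    | (m+1) =>
      rcases lt_or_eq_of_le ht with htlt | hteq
      · -- t < 0 : use Taylor's theorem
        obtain ⟨ξ, hξmem, hξ⟩ := taylor_left (tslice_smooth hU x) htlt m
        rw [hξ]
        rw [abs_div, abs_mul, abs_pow]
        have hξbound : |iteratedDeriv (m+1) (u x) ξ|
            ≤ A₁ * Real.exp (A₂ * (‖x‖ + |t|)) * C ^ (m+1) := by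
          rw [hlink x (m+1) ξ]
          have hb := hlad (m+1) (x, ξ) (le_of_lt hξmem.2)
          have hmono : Real.exp (A₂ * (‖x‖ + |ξ|)) ≤ Real.exp (A₂ * (‖x‖ + |t|)) := by
            apply Real.exp_le_exp.2
            have : |ξ| ≤ |t| := by
              rw [abs_of_nonpos (le_of_lt hξmem.2), abs_of_nonpos ht]
              linarith [hξmem.1]
            nlinarith
          calc |DtIter (m+1) U (x, ξ)| ≤ A₁ * Real.exp (A₂ * (‖x‖ + |ξ|)) * C ^ (m+1) := hb
          _ ≤ A₁ * Real.exp (A₂ * (‖x‖ + |t|)) * C ^ (m+1) := by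
              apply mul_le_mul_of_nonneg_right _ (by positivity)
              exact mul_le_mul_of_nonneg_left hmono hA₁.le
        have hfact : |((m+1).factorial : ℝ)| = ((m+1).factorial : ℝ) := by
          rw [abs_of_pos]; exact_mod_cast (m+1).factorial_pos
        rw [hfact]
        rw [mul_pow]
        calc |iteratedDeriv (m+1) (u x) ξ| * |t| ^ (m+1) / ((m+1).factorial : ℝ)
            ≤ (A₁ * Real.exp (A₂ * (‖x‖ + |t|)) * C ^ (m+1)) * |t| ^ (m+1)
              / ((m+1).factorial : ℝ) := by
              apply (div_le_div_iff_of_pos_right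
                (by exact_mod_cast (m+1).factorial_pos : (0:ℝ) < (((m+1).factorial : ℕ) : ℝ))).2
              exact mul_le_mul_of_nonneg_right hξbound (by positivity)
        _ = A₁ * Real.exp (A₂ * (‖x‖ + |t|)) * (C ^ (m+1) * |t| ^ (m+1))
              / ((m+1).factorial : ℝ) := by ring
      · -- t = 0
        subst hteq
        have hsum : ∑ i ∈ Finset.range (m+1),
            iteratedDeriv i (u x) 0 * (0:ℝ) ^ i / (Nat.factorial i : ℝ) = u x 0 := by
          rw [Finset.sum_eq_single_of_mem 0 (Finset.mem_range.2 (Nat.succ_pos m))]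
          · rw [iteratedDeriv_zero, pow_zero, Nat.factorial_zero]
            norm_num
          · intro i _ hi
            rw [zero_pow hi]
            ring
        rw [hsum, sub_self, abs_zero]
        positivity
  constructor
  · -- pointwise HasSum
    intro x t ht
    set h : ℕ → ℝ := fun j => iteratedDeriv j (u x) 0 * t ^ j / (Nat.factorial j : ℝ) with hhdef
    have hterm : ∀ j : ℕ, |h j| ≤ (A₁ * Real.exp (A₂ * ‖x‖)) * ((C * |t|) ^ j
        / (Nat.factorial j : ℝ)) := by
      intro j
      have hcoef : |iteratedDeriv j (u x) 0| ≤ A₁ * Real.exp (A₂ * ‖x‖) * C ^ j := by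
        rw [hlink x j 0]
        have := hlad j (x, 0) (le_refl 0)
        simpa using this
      have hgoal : |iteratedDeriv j (u x) 0| * |t| ^ j
          ≤ A₁ * Real.exp (A₂ * ‖x‖) * (C ^ j * |t| ^ j) := by
        calc |iteratedDeriv j (u x) 0| * |t| ^ j
            ≤ (A₁ * Real.exp (A₂ * ‖x‖) * C ^ j) * |t| ^ j :=
              mul_le_mul_of_nonneg_right hcoef (by positivity)
        _ = A₁ * Real.exp (A₂ * ‖x‖) * (C ^ j * |t| ^ j) := by ring
      have hfact : |((j).factorial : ℝ)| = ((j).factorial : ℝ) := by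
        rw [abs_of_pos]; exact_mod_cast (j).factorial_pos
      rw [hhdef]
      rw [abs_div, abs_mul, abs_pow, hfact, mul_pow]
      rw [show A₁ * Real.exp (A₂ * ‖x‖) * ((C ^ j * |t| ^ j) / (Nat.factorial j : ℝ))
          = (A₁ * Real.exp (A₂ * ‖x‖) * (C ^ j * |t| ^ j)) / (Nat.factorial j : ℝ) from by
        ring]
      exact (div_le_div_iff_of_pos_right (by exact_mod_cast j.factorial_pos)).2 hgoal
    have hmajsum : Summable (fun j : ℕ => (A₁ * Real.exp (A₂ * ‖x‖))
        * ((C * |t|) ^ j / (Nat.factorial j : ℝ))) :=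
      (Real.summable_pow_div_factorial (C * |t|)).mul_left _
    have habs : Summable (fun j => |h j|) :=
      Summable.of_nonneg_of_le (fun j => abs_nonneg _) hterm hmajsum
    have hsumm : Summable h := habs.of_abs
    have ht1 : Tendsto (fun m => ∑ i ∈ Finset.range m, h i) atTop (nhds (∑' i, h i)) :=
      hsumm.hasSum.tendsto_sum_nat
    have hc0 : Tendsto (fun m : ℕ => A₁ * Real.exp (A₂ * (‖x‖ + |t|))
        * ((C * |t|) ^ m / (Nat.factorial m : ℝ))) atTop (nhds 0) := by
      have := FloorSemiring.tendsto_pow_div_factorial_atTop (K := ℝ) (C * |t|)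
      have h2 := this.const_mul (A₁ * Real.exp (A₂ * (‖x‖ + |t|)))
      simpa using h2
    have ht2 : Tendsto (fun m => ∑ i ∈ Finset.range m, h i) atTop (nhds (u x t)) := by
      have hdiff : Tendsto (fun m => u x t - ∑ i ∈ Finset.range m, h i) atTop (nhds 0) := by
        apply squeeze_zero_norm _ hc0
        intro m
        rw [Real.norm_eq_abs]
        calc |u x t - ∑ i ∈ Finset.range m, h i|
            ≤ A₁ * Real.exp (A₂ * (‖x‖ + |t|)) * (C * |t|) ^ m / (Nat.factorial m : ℝ) :=
              hrem x t ht m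
        _ = A₁ * Real.exp (A₂ * (‖x‖ + |t|)) * ((C * |t|) ^ m / (Nat.factorial m : ℝ)) := by
              ring
      have h9 := Tendsto.sub
        (tendsto_const_nhds : Tendsto (fun _ : ℕ => u x t) atTop (nhds (u x t))) hdiff
      simpa using h9
    have : (∑' i, h i) = u x t := tendsto_nhds_unique ht1 ht2
    rw [← this]
    exact hsumm.hasSum
  · -- uniform convergence
    intro R hR
    rw [Metric.tendstoUniformlyOn_iff]
    intro ε hε
    have hc0 : Tendsto (fun m : ℕ => A₁ * Real.exp (A₂ * (2*R))
        * ((C * R) ^ m / (Nat.factorial m : ℝ))) atTop (nhds 0) := by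
      have := FloorSemiring.tendsto_pow_div_factorial_atTop (K := ℝ) (C * R)
      have h2 := this.const_mul (A₁ * Real.exp (A₂ * (2*R)))
      simpa using h2
    have hev : ∀ᶠ m : ℕ in atTop, A₁ * Real.exp (A₂ * (2*R))
        * ((C * R) ^ m / (Nat.factorial m : ℝ)) < ε := by
      have := hc0.eventually (gt_mem_nhds hε)
      exact this
    filter_upwards [hev] with m hm
    intro p hp
    obtain ⟨hp1, hp2⟩ := mem_prod.1 hp
    have hx : ‖p.1‖ ≤ R := by
      rw [mem_closedBall, dist_zero_right] at hp1
      exact hp1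
    have ht0 : p.2 ≤ 0 := hp2.2
    have htR : |p.2| ≤ R := by
      rw [abs_of_nonpos ht0]
      linarith [hp2.1]
    rw [Real.dist_eq]
    calc |u p.1 p.2 - ∑ i ∈ Finset.range m, iteratedDeriv i (u p.1) 0 * p.2 ^ i
          / (Nat.factorial i : ℝ)|
        ≤ A₁ * Real.exp (A₂ * (‖p.1‖ + |p.2|)) * (C * |p.2|) ^ m / (Nat.factorial m : ℝ) :=
          hrem p.1 p.2 ht0 m
    _ ≤ A₁ * Real.exp (A₂ * (2*R)) * ((C * R) ^ m / (Nat.factorial m : ℝ)) := by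
        have hexp : Real.exp (A₂ * (‖p.1‖ + |p.2|)) ≤ Real.exp (A₂ * (2*R)) := by
          apply Real.exp_le_exp.2
          nlinarith
        have hpow : (C * |p.2|) ^ m ≤ (C * R) ^ m := by
          apply pow_le_pow_left₀ (by positivity)
          exact mul_le_mul_of_nonneg_left htR hC0
        have h1 : A₁ * Real.exp (A₂ * (‖p.1‖ + |p.2|)) ≤ A₁ * Real.exp (A₂ * (2*R)) :=
          mul_le_mul_of_nonneg_left hexp hA₁.le
        rw [mul_div_assoc]
        apply mul_le_mul h1 _ (by positivity) (by positivity)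
        exact (div_le_div_iff_of_pos_right (by exact_mod_cast m.factorial_pos)).2 hpow
    _ < ε := hm
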